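/- Let P : V* → V be a skew linear map and Σ ⊆ V* a subspace. Then E_P = {(Pσ, σ) : σ ∈ Σ} is an isotropic subspace of V × V*, and its g-orthogonal complement is E_P^⊥ = {(Pβ + Y, β) : β ∈ V*, Y ∈ ann_V Σ}, where ann_V Σ = {v ∈ V : σ(v) = 0 for all σ ∈ Σ}. -/

import Mathlib

open Module LinearMap

/-- The pairing metric `g((X,α),(Y,β)) = (1/2)(α(Y) + β(X))` on `V × V*`. -/
noncomputable def bigG (V : Type*) [AddCommGroup V] [Module ℝ V] :
    LinearMap.BilinForm ℝ (V × Module.Dual ℝ V) :=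
  LinearMap.mk₂ ℝ (fun p q => (1 / 2 : ℝ) * (p.2 q.1 + q.2 p.1))
    (fun p p' q => by simp; ring)
    (fun c p q => by simp; ring)
    (fun p q q' => by simp; ring)
    (fun c p q => by simp; ring)

/-- The `g`-orthogonal complement of a subspace of `V × V*`. -/
noncomputable def gOrth {V : Type*} [AddCommGroup V] [Module ℝ V]
    (E : Submodule ℝ (V × Module.Dual ℝ V)) : Submodule ℝ (V × Module.Dual ℝ V) :=
  LinearMap.BilinForm.orthogonal (bigG V) E

/-- The graph `E_P = {(Pσ, σ) : σ ∈ Σ}` of a skew map `P : V* → V` over `Σ ⊆ V*`. -/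
noncomputable def graphOn {V : Type*} [AddCommGroup V] [Module ℝ V]
    (P : Module.Dual ℝ V →ₗ[ℝ] V) (Sgm : Submodule ℝ (Module.Dual ℝ V)) :
    Submodule ℝ (V × Module.Dual ℝ V) :=
  Submodule.map (P.prod LinearMap.id) Sgm

/-!
By skewness of `P`, `g((Pσ, σ), (X, β)) = ½ σ(X - Pβ)`. Hence `(X, β)` is orthogonal to `E_P`
exactly when `X - Pβ` annihilates `Σ`, and points of `E_P` itself have `X - Pβ = 0`.
-/

section

variable {V : Type*} [AddCommGroup V] [Module ℝ V]

theorem bigG_apply (p q : V × Dual ℝ V) : bigG V p q = 1 / 2 * (p.2 q.1 + q.2 p.1) := rfl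

theorem bigG_graph_apply {P : Dual ℝ V →ₗ[ℝ] V} (hP : ∀ α β : Dual ℝ V, β (P α) = -α (P β))
    (σ : Dual ℝ V) (q : V × Dual ℝ V) : bigG V (P σ, σ) q = 1 / 2 * σ (q.1 - P q.2) := by
  rw [bigG_apply, hP, map_sub, sub_eq_add_neg]

theorem mem_gOrth_graphOn_iff {P : Dual ℝ V →ₗ[ℝ] V}
    (hP : ∀ α β : Dual ℝ V, β (P α) = -α (P β)) (Sgm : Submodule ℝ (Dual ℝ V))
    (q : V × Dual ℝ V) :
    q ∈ gOrth (graphOn P Sgm) ↔ q.1 - P q.2 ∈ Sgm.dualCoannihilator := by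
  simp only [gOrth, BilinForm.mem_orthogonal_iff, graphOn,
    Submodule.mem_map, Submodule.mem_dualCoannihilator]
  constructor
  · intro h σ hσ
    simpa [bigG_graph_apply hP] using h _ ⟨σ, hσ, rfl⟩
  · rintro h _ ⟨σ, hσ, rfl⟩
    simp [bigG_graph_apply hP, h σ hσ]

theorem graphOn_le_gOrth {P : Dual ℝ V →ₗ[ℝ] V}
    (hP : ∀ α β : Dual ℝ V, β (P α) = -α (P β)) (Sgm : Submodule ℝ (Dual ℝ V)) :
    graphOn P Sgm ≤ gOrth (graphOn P Sgm) := by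
  rintro _ ⟨τ, -, rfl⟩
  rw [mem_gOrth_graphOn_iff hP]
  simp

end

theorem stmt7_general (V : Type*) [AddCommGroup V] [Module ℝ V]
    (P : Dual ℝ V →ₗ[ℝ] V)
    (hP : ∀ α β : Dual ℝ V, β (P α) = -α (P β))
    (Sgm : Submodule ℝ (Dual ℝ V)) :
    (∀ p ∈ graphOn P Sgm, ∀ q ∈ graphOn P Sgm, bigG V p q = 0) ∧
    (gOrth (graphOn P Sgm) : Set (V × Dual ℝ V)) =
      {q : V × Dual ℝ V | ∃ β : Dual ℝ V, ∃ Y ∈ Sgm.dualCoannihilator, q = (P β + Y, β)} := by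
  refine ⟨fun p hp q hq => ?_, Set.ext fun q => ?_⟩
  · have h := graphOn_le_gOrth hP Sgm hq
    rw [gOrth, BilinForm.mem_orthogonal_iff] at h
    exact h p hp
  · rw [SetLike.mem_coe, mem_gOrth_graphOn_iff hP, Set.mem_ofPred_eq]
    constructor
    · exact fun h => ⟨q.2, q.1 - P q.2, h, by simp⟩
    · rintro ⟨β, Y, hY, rfl⟩
      simpa using hY

/-- For a skew `P : V* → V` and `Σ ⊆ V*`, the graph `E_P = {(Pσ,σ) : σ ∈ Σ}` is isotropic
and `E_P^⊥ = {(Pβ + Y, β) : β ∈ V*, Y ∈ ann_V Σ}`. -/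
theorem stmt7 (V : Type*) [AddCommGroup V] [Module ℝ V] [FiniteDimensional ℝ V]
    (P : Dual ℝ V →ₗ[ℝ] V)
    (hP : ∀ α β : Dual ℝ V, β (P α) = -α (P β))
    (Sgm : Submodule ℝ (Dual ℝ V)) :
    (∀ p ∈ graphOn P Sgm, ∀ q ∈ graphOn P Sgm, bigG V p q = 0) ∧
    (gOrth (graphOn P Sgm) : Set (V × Dual ℝ V)) =
      {q : V × Dual ℝ V | ∃ β : Dual ℝ V, ∃ Y ∈ Sgm.dualCoannihilator, q = (P β + Y, β)} :=
  stmt7_general V P hP Sgm
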